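/- Let C ∈ M_n(ℤ₊) be the adjacency matrix of a finite directed graph, E(C) the associated graph W*-correspondence over the diagonal algebra D_n ⊆ M_n(ℂ), and σ the identity representation of D_n on ℂⁿ. Then the σ-dual correspondence E(C)^σ is isomorphic to E(Cᵗ), the correspondence of the transposed matrix, as a W*-correspondence over σ(D_n)' = D_n. -/

import Mathlib

noncomputable section

open scoped ComplexConjugate

/-- A multiplication (diagonal) operator on a finite-dimensional `ℓ²` space. -/
def diagOp {ι : Type*} [Fintype ι] (a : ι → ℂ) :
    EuclideanSpace ℂ ι →L[ℂ] EuclideanSpace ℂ ι :=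
  LinearMap.toContinuousLinearMap
    { toFun := fun h => (WithLp.toLp 2 (fun i => a i * h i) : EuclideanSpace ℂ ι)
      map_add' := by
        intro x y; ext i
        simp [PiLp.add_apply, mul_add]
      map_smul' := by
        intro c x; ext i
        simp [PiLp.smul_apply, smul_eq_mul] <;> ring }

/-- The edges of the directed graph with adjacency matrix `Cm`:
`Cm i j` edges from `j` to `i`. -/
abbrev GraphEdge (n : ℕ) (Cm : Fin n → Fin n → ℕ) := Σ i j : Fin n, Fin (Cm i j)

/-- The range of an edge. -/
def edgeRange {n : ℕ} {Cm : Fin n → Fin n → ℕ} (e : GraphEdge n Cm) : Fin n :=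
  e.1

/-- The source of an edge. -/
def edgeSrc {n : ℕ} {Cm : Fin n → Fin n → ℕ} (e : GraphEdge n Cm) : Fin n :=
  e.2.1

/-- The operator `ℂⁿ → E(C) ⊗_σ ℂⁿ` associated with a function on the edges:
`(Ψ g) h = (g e · h(range e))_e`.  Here `E(C) ⊗_σ ℂⁿ ≅ ℓ²(edges)`
canonically (`e ⊗ δ_j ↦ δ_e` for `j` the source of `e`). -/
def graphOp {n : ℕ} {Cm : Fin n → Fin n → ℕ} (g : GraphEdge n Cm → ℂ) :
    EuclideanSpace ℂ (Fin n) →L[ℂ] EuclideanSpace ℂ (GraphEdge n Cm) :=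
  LinearMap.toContinuousLinearMap
    { toFun := fun h =>
        (WithLp.toLp 2 (fun e => g e * h (edgeRange e)) : EuclideanSpace ℂ (GraphEdge n Cm))
      map_add' := by
        intro x y; ext e
        simp [PiLp.add_apply, mul_add]
      map_smul' := by
        intro c x; ext e
        simp [PiLp.smul_apply, smul_eq_mul] <;> ring }

/-- The `σ`-dual of the graph correspondence `E(C)`, for `σ` the identity
representation of the diagonal algebra `Dₙ` on `ℂⁿ`: all operators
`η : ℂⁿ → E(C) ⊗_σ ℂⁿ ≅ ℓ²(edges)` with `η σ(a) = (φ(a) ⊗ I) η`, where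
`φ(a) ⊗ I` multiplies the coordinate at an edge `e` by `a (range e)`. -/
def graphDual (n : ℕ) (Cm : Fin n → Fin n → ℕ) :
    Set (EuclideanSpace ℂ (Fin n) →L[ℂ] EuclideanSpace ℂ (GraphEdge n Cm)) :=
  {η | ∀ a : Fin n → ℂ,
    η ∘L diagOp a = diagOp (fun e => a (edgeRange e)) ∘L η}

open ContinuousLinearMap in
/-- For the graph correspondence `E(C)` over the diagonal
algebra `Dₙ` and `σ` the identity representation of `Dₙ` on `ℂⁿ`, the dual
`E(C)^σ` is (isomorphic to) `E(Cᵗ)`, the correspondence of the transposed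
graph, as a W*-correspondence over `σ(Dₙ)' = Dₙ`.  Concretely, `g ↦ Ψ g`
(`Ψ g h = (g e · h (range e))_e`, `ℓ²`-functions on edges being exactly the
elements of `E(Cᵗ)` with sources and ranges exchanged) is a linear bijection
of `E(Cᵗ)` onto `E(C)^σ` which carries the `Dₙ`-valued inner product of
`E(Cᵗ)` to `⟨η₁, η₂⟩ = η₁* η₂` and intertwines the `Dₙ`-bimodule actions. -/
theorem stmt18 (n : ℕ) (Cm : Fin n → Fin n → ℕ) :
    -- `Ψ` takes values in the dual
    (∀ g : GraphEdge n Cm → ℂ, graphOp g ∈ graphDual n Cm) ∧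
    -- `Ψ` is linear
    (∀ (c : ℂ) (g g' : GraphEdge n Cm → ℂ),
        graphOp (fun e => c * g e + g' e) = c • graphOp g + graphOp g') ∧
    -- `Ψ` is a bijection onto the dual
    (∀ η ∈ graphDual n Cm, ∃! g : GraphEdge n Cm → ℂ, graphOp g = η) ∧
    -- `Ψ` carries the inner product of `E(Cᵗ)` to the inner product of the dual
    (∀ g g' : GraphEdge n Cm → ℂ,
        adjoint (graphOp g) ∘L graphOp g' =
          diagOp (fun j => ∑ e : GraphEdge n Cm,
            if edgeRange e = j then conj (g e) * g' e else 0)) ∧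
    -- `Ψ` intertwines the left `Dₙ`-actions
    (∀ (a : Fin n → ℂ) (g : GraphEdge n Cm → ℂ),
        graphOp (fun e => a (edgeSrc e) * g e) =
          diagOp (fun e : GraphEdge n Cm => a (edgeSrc e)) ∘L graphOp g) ∧
    -- `Ψ` intertwines the right `Dₙ`-actions
    (∀ (a : Fin n → ℂ) (g : GraphEdge n Cm → ℂ),
        graphOp (fun e => g e * a (edgeRange e)) = graphOp g ∘L diagOp a) := by

  constructor
  · intro g a
    ext h e
    simp only [ContinuousLinearMap.comp_apply, graphOp, diagOp,
      LinearMap.coe_toContinuousLinearMap', LinearMap.coe_mk, AddHom.coe_mk]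
    ring
  constructor
  · intro c g g'
    ext h e
    simp only [graphOp, ContinuousLinearMap.add_apply, ContinuousLinearMap.smul_apply,
      LinearMap.coe_toContinuousLinearMap', LinearMap.coe_mk, AddHom.coe_mk,
      PiLp.add_apply, PiLp.smul_apply, smul_eq_mul]
    ring
  constructor
  · intro η hη
    have key : ∀ (j : Fin n) (h : EuclideanSpace ℂ (Fin n)) (e : GraphEdge n Cm),
        η (EuclideanSpace.single j (h j)) e
          = (if edgeRange e = j then η h e else 0) := by
      intro j h e
      have h1 := congrArg (fun T : EuclideanSpace ℂ (Fin n) →L[ℂ]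
          EuclideanSpace ℂ (GraphEdge n Cm) => T h) (hη (Pi.single j 1))
      have h2 : diagOp (Pi.single j (1:ℂ)) h = EuclideanSpace.single j (h j) := by
        ext i
        simp only [diagOp, LinearMap.coe_toContinuousLinearMap', LinearMap.coe_mk,
          AddHom.coe_mk, EuclideanSpace.single_apply, Pi.single_apply]
        by_cases hi : i = j
        · subst hi; simp
        · simp [hi]
      simp only [ContinuousLinearMap.comp_apply] at h1
      rw [h2] at h1
      have := congrArg (fun v : EuclideanSpace ℂ (GraphEdge n Cm) => v e) h1
      simpa [diagOp, Pi.single_apply, ite_mul] using this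
    refine ⟨fun e => η (EuclideanSpace.single (edgeRange e) 1) e, ?_, ?_⟩
    · ext h e
      have k1 := key (edgeRange e) h e
      rw [if_pos rfl] at k1
      have k2 : EuclideanSpace.single (edgeRange e) (h (edgeRange e))
          = h (edgeRange e) • EuclideanSpace.single (edgeRange e) (1:ℂ) := by
        ext i
        by_cases hi : i = edgeRange e
        · subst hi; simp [EuclideanSpace.single_apply]
        · simp [EuclideanSpace.single_apply, hi]
      rw [k2, map_smul] at k1
      simp only [graphOp, LinearMap.coe_toContinuousLinearMap', LinearMap.coe_mk,
        AddHom.coe_mk]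
      rw [← k1, PiLp.smul_apply, smul_eq_mul]
      ring
    · intro g hg
      funext e
      rw [← hg]
      simp [graphOp, EuclideanSpace.single_apply]
  constructor
  · intro g g'
    refine ContinuousLinearMap.ext fun x => ?_
    refine ext_inner_left ℂ fun y => ?_
    rw [ContinuousLinearMap.comp_apply, ContinuousLinearMap.adjoint_inner_right]
    simp only [graphOp, diagOp, LinearMap.coe_toContinuousLinearMap', LinearMap.coe_mk,
      AddHom.coe_mk]
    rw [PiLp.inner_apply, PiLp.inner_apply]
    simp only [RCLike.inner_apply, map_mul, Finset.sum_mul, Finset.mul_sum]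
    rw [Finset.sum_comm]
    refine Finset.sum_congr rfl fun e _ => ?_
    simp only [ite_mul, mul_ite, zero_mul, mul_zero]
    rw [Finset.sum_ite_eq (Finset.univ) (edgeRange e)
      (fun j => starRingEnd ℂ (g e) * g' e * x j * starRingEnd ℂ (y j))]
    simp only [Finset.mem_univ, if_pos]
    ring
  constructor
  · intro a g
    ext h e
    simp only [ContinuousLinearMap.comp_apply, graphOp, diagOp,
      LinearMap.coe_toContinuousLinearMap', LinearMap.coe_mk, AddHom.coe_mk]
    ring
  · intro a g
    ext h e
    simp only [ContinuousLinearMap.comp_apply, graphOp, diagOp,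
      LinearMap.coe_toContinuousLinearMap', LinearMap.coe_mk, AddHom.coe_mk]
    ring


end
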